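/- arXiv:1503.08139 — 3 statements merged into one kernel-verified Lean document; each statement's English description precedes it below -/
import Mathlib

section
/- Define g : [0, ∞) → ℝ by g(x) = (x+1) log₂(x+1) − x log₂ x for x > 0 and g(0) = 0. For every λ ∈ [0, 1], the function x ↦ g(x) − g(λx) is monotone nondecreasing on [0, ∞). -/
/-- The entropy of a bosonic thermal state of mean photon number `x`:
`g(x) = (x+1) log₂(x+1) − x log₂ x` for `x > 0` and `g 0 = 0` (note that
`Real.logb 2 0 = 0`, so the formula also gives `g 0 = 0`). -/
noncomputable def thermalEntropy (x : ℝ) : ℝ :=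
  (x + 1) * Real.logb 2 (x + 1) - x * Real.logb 2 x

/-!
Differentiating, `g'(x) = log₂ (1 + 1/x)`, so the derivative of `x ↦ g x - g (λx)` is
`log₂ (1 + 1/x) - λ log₂ (1 + 1/(λx))`. This is nonnegative by Bernoulli's inequality
`(1 + s)^λ ≤ 1 + λs` for `s = 1/(λx)`.
-/

open Real Set

lemma thermalEntropy_eq_div_log (x : ℝ) :
    thermalEntropy x = ((x + 1) * log (x + 1) - x * log x) / log 2 := by
  unfold thermalEntropy logb
  ring

lemma continuous_thermalEntropy : Continuous thermalEntropy := by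
  simp only [funext thermalEntropy_eq_div_log]
  exact ((continuous_mul_log.comp (continuous_add_const 1)).sub continuous_mul_log).div_const _

lemma hasDerivAt_thermalEntropy {x : ℝ} (hx : 0 < x) :
    HasDerivAt thermalEntropy (logb 2 (1 + x⁻¹)) x := by
  have h := (((hasDerivAt_mul_log (x := x + 1) (by positivity)).comp_add_const x 1).sub
    (hasDerivAt_mul_log hx.ne')).div_const (log 2)
  have hderiv : (log (x + 1) + 1 - (log x + 1)) / log 2 = logb 2 (1 + x⁻¹) := by
    rw [show 1 + x⁻¹ = (x + 1) / x by field_simp, logb_div (by positivity) hx.ne', logb, logb,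
      ← sub_div]
    ring
  rw [hderiv] at h
  exact h.congr_of_eventuallyEq (.of_forall thermalEntropy_eq_div_log)

lemma hasDerivAt_thermalEntropy_const_mul {t x : ℝ} (ht : 0 ≤ t) (hx : 0 < x) :
    HasDerivAt (fun y => thermalEntropy (t * y)) (t * logb 2 (1 + (t * x)⁻¹)) x := by
  rcases ht.eq_or_lt with rfl | ht
  · simpa using hasDerivAt_const x (thermalEntropy 0)
  · have h := (hasDerivAt_thermalEntropy (mul_pos ht hx)).comp x ((hasDerivAt_id x).const_mul t)
    simpa [Function.comp_def, mul_comm] using h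

lemma mul_logb_one_add_inv_mul_le {b t x : ℝ} (hb : 1 < b) (ht₀ : 0 ≤ t) (ht₁ : t ≤ 1)
    (hx : 0 ≤ x) : t * logb b (1 + (t * x)⁻¹) ≤ logb b (1 + x⁻¹) := by
  have hs : 0 ≤ (t * x)⁻¹ := by positivity
  have hbernoulli : (1 + (t * x)⁻¹) ^ t ≤ 1 + x⁻¹ := calc
    (1 + (t * x)⁻¹) ^ t ≤ 1 + t * (t * x)⁻¹ :=
      rpow_one_add_le_one_add_mul_self (by linarith) ht₀ ht₁
    _ = 1 + t * t⁻¹ * x⁻¹ := by rw [mul_inv, mul_assoc]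
    _ ≤ 1 + x⁻¹ := by
      gcongr
      exact mul_le_of_le_one_left (by positivity) mul_inv_le_one
  rw [← logb_rpow_eq_mul_logb_of_pos (by positivity)]
  exact logb_le_logb_of_le hb (by positivity) hbernoulli

/-- For every `λ ∈ [0,1]`, the function `x ↦ g(x) − g(λx)` is
monotone nondecreasing on `[0, ∞)`. -/
theorem thermalEntropy_diff_monotone (lam : ℝ) (hlam : lam ∈ Set.Icc (0 : ℝ) 1) :
    MonotoneOn (fun x => thermalEntropy x - thermalEntropy (lam * x)) (Set.Ici (0 : ℝ)) := by
  obtain ⟨hlam₀, hlam₁⟩ := hlam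
  have hcont : Continuous fun x => thermalEntropy x - thermalEntropy (lam * x) :=
    continuous_thermalEntropy.sub (continuous_thermalEntropy.comp (continuous_const_mul lam))
  refine monotoneOn_of_hasDerivWithinAt_nonneg (convex_Ici 0) hcont.continuousOn
    (f' := fun x => logb 2 (1 + x⁻¹) - lam * logb 2 (1 + (lam * x)⁻¹))
    (fun x hx => ?_) (fun x hx => ?_)
  all_goals rw [interior_Ici] at hx
  · exact ((hasDerivAt_thermalEntropy hx).sub
      (hasDerivAt_thermalEntropy_const_mul hlam₀ hx)).hasDerivWithinAt
  · exact sub_nonneg.mpr (mul_logb_one_add_inv_mul_le one_lt_two hlam₀ hlam₁ hx.le)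
end

section
/- Define g : [0, ∞) → ℝ by g(x) = (x+1) log₂(x+1) − x log₂ x for x > 0 and g(0) = 0. For every λ ∈ (0, 1] and every x ≥ 0, g(x) − g(λx) ≤ log₂(1/λ). -/
/-!
For `y > 0` write `g(y) = log₂ y + (y + 1) log₂ (1 + 1/y)`. The second term is, up to the factor
`1 / log 2`, the slope of the secant of the convex function `u ↦ u log u` between `1` and
`1 + 1/y`, so it decreases in `y`. Hence `g(x) − g(λx) ≤ log₂ x − log₂ (λx) = log₂ (1/λ)`.
-/

open Real Set

lemma monotoneOn_mul_log_div_sub_one :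
    MonotoneOn (fun u : ℝ => u * log u / (u - 1)) (Ioi 1) := by
  intro u (hu : 1 < u) v (hv : 1 < v) huv
  have hslope := convexOn_mul_log.secant_mono (a := 1) (by simp)
    (mem_Ici.2 (by linarith)) (mem_Ici.2 (by linarith)) hu.ne' hv.ne' huv
  simpa using hslope

lemma antitoneOn_add_one_mul_log_one_add_inv :
    AntitoneOn (fun y : ℝ => (y + 1) * log (1 + y⁻¹)) (Ioi 0) := by
  have hslope : ∀ y : ℝ, 0 < y → (y + 1) * log (1 + y⁻¹) =
      (1 + y⁻¹) * log (1 + y⁻¹) / (1 + y⁻¹ - 1) := by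
    intro y hy
    field_simp
    ring
  intro a ha b hb hab
  simp only [hslope a ha, hslope b hb]
  refine monotoneOn_mul_log_div_sub_one ?_ ?_ (by gcongr)
  · exact lt_add_of_pos_right (1 : ℝ) (inv_pos.2 hb)
  · exact lt_add_of_pos_right (1 : ℝ) (inv_pos.2 ha)

lemma thermalEntropy_eq_logb_add (y : ℝ) (hy : 0 < y) :
    thermalEntropy y = logb 2 y + (y + 1) * log (1 + y⁻¹) / log 2 := by
  have hsum : 1 + y⁻¹ = (y + 1) / y := by field_simp
  rw [thermalEntropy, hsum, log_div (by positivity) hy.ne']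
  unfold logb
  ring

/-- For every `λ ∈ (0,1]` and every `x ≥ 0`,
`g(x) − g(λx) ≤ log₂(1/λ)`. -/
theorem thermalEntropy_diff_le (lam : ℝ) (hlam : lam ∈ Set.Ioc (0 : ℝ) 1)
    (x : ℝ) (hx : 0 ≤ x) :
    thermalEntropy x - thermalEntropy (lam * x) ≤ Real.logb 2 (1 / lam) := by
  obtain ⟨hlam0, hlam1⟩ := hlam
  rcases hx.eq_or_lt with rfl | hx0
  · simpa [thermalEntropy] using logb_nonneg one_lt_two (one_le_one_div hlam0 hlam1)
  have hlamx : 0 < lam * x := mul_pos hlam0 hx0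
  have hF := antitoneOn_add_one_mul_log_one_add_inv hlamx hx0
    (mul_le_of_le_one_left hx0.le hlam1)
  have hlogb : logb 2 x - logb 2 (lam * x) = logb 2 (1 / lam) := by
    rw [logb_mul hlam0.ne' hx0.ne', one_div, logb_inv]
    ring
  rw [thermalEntropy_eq_logb_add x hx0, thermalEntropy_eq_logb_add _ hlamx, ← hlogb]
  have := div_le_div_of_nonneg_right hF (log_pos one_lt_two).le
  linarith
end

section
/- For every a ≥ 0, the function x ↦ log₂(1 + a/x) is convex on (0, ∞). -/
open Real Set

lemma hasDerivAt_log_add_sub_log {a x : ℝ} (hx : 0 < x) (hxa : 0 < x + a) :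
    HasDerivAt (fun x => log (x + a) - log x) ((x + a)⁻¹ - x⁻¹) x := by
  simpa using (((hasDerivAt_id' x).add_const a).log hxa.ne').fun_sub ((hasDerivAt_id' x).log hx.ne')

lemma hasDerivAt_inv_add_sub_inv {a x : ℝ} (hx : 0 < x) (hxa : 0 < x + a) :
    HasDerivAt (fun x => (x + a)⁻¹ - x⁻¹) ((x ^ 2)⁻¹ - ((x + a) ^ 2)⁻¹) x :=
  (((hasDerivAt_id' x).add_const a).fun_inv hxa.ne' |>.fun_sub
    ((hasDerivAt_id' x).fun_inv hx.ne')).congr_deriv (by ring)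

lemma convexOn_log_add_sub_log {a : ℝ} (ha : 0 ≤ a) :
    ConvexOn ℝ (Ioi 0) (fun x => log (x + a) - log x) := by
  have hxa {x : ℝ} (hx : x ∈ Ioi 0) : 0 < x + a := add_pos_of_pos_of_nonneg hx ha
  refine convexOn_of_hasDerivWithinAt2_nonneg (convex_Ioi 0) ?_ ?_ ?_ ?_
      (f' := fun x => (x + a)⁻¹ - x⁻¹) (f'' := fun x => (x ^ 2)⁻¹ - ((x + a) ^ 2)⁻¹)
  · exact fun x hx => (hasDerivAt_log_add_sub_log hx (hxa hx)).continuousAt.continuousWithinAt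
  · rw [interior_Ioi]
    exact fun x hx => (hasDerivAt_log_add_sub_log hx (hxa hx)).hasDerivWithinAt
  · rw [interior_Ioi]
    exact fun x hx => (hasDerivAt_inv_add_sub_inv hx (hxa hx)).hasDerivWithinAt
  · rw [interior_Ioi]
    intro x (hx : 0 < x)
    have hsq : x ^ 2 ≤ (x + a) ^ 2 := pow_le_pow_left₀ hx.le (by linarith) 2
    exact sub_nonneg.2 (inv_anti₀ (by positivity) hsq)

/-- For every `a ≥ 0`, the function `x ↦ log₂(1 + a/x)` is convex
on `(0, ∞)`. -/
theorem logb_one_add_div_convexOn (a : ℝ) (ha : 0 ≤ a) :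
    ConvexOn ℝ (Set.Ioi (0 : ℝ)) (fun x => Real.logb 2 (1 + a / x)) := by
  refine ((convexOn_log_add_sub_log ha).smul (inv_nonneg.2 (log_nonneg one_le_two))).congr ?_
  intro x (hx : 0 < x)
  have hxa : a + x ≠ 0 := (add_pos_of_nonneg_of_pos ha hx).ne'
  simp only [smul_eq_mul, logb, one_add_div hx.ne', log_div hxa hx.ne', add_comm x a]
  ring
end
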